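/- Let a ∈ ℂ with |a| < 1, let 0 < ρ < 1, let D ∈ ℕ, and let z, t ∈ ℂ with |z| ≤ ρ and |t| ≤ ρ. With L_j^a(z) := (sqrt(1 − |a|²)/(1 − conj(a)·z)) · B^a(z)^j and B^a(z) := (z − a)/(1 − conj(a)·z), the truncated Laguerre kernel ξ_D^a(z,t) := Σ_{j=0}^{D−1} L_j^a(z) · conj(L_j^a(t)) approximates the Cauchy kernel ξ(z,t) := 1/(1 − conj(t)·z) with the uniform error bound | ξ(z,t) − ξ_D^a(z,t) | ≤ ( (|a| + ρ)/(1 + |a|·ρ) )^{2D} / (1 − ρ²). -/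

import Mathlib

/-!
Write `k(z,t) = 1/(1 - conj t · z)` for the Cauchy kernel. The zeroth Laguerre term satisfies
`k(z,t) - L₀(z) conj L₀(t) = B(z) conj B(t) · k(z,t)` and `L_j = L₀ · B^j`, so the truncated
Laguerre kernel is a geometric sum and the error is exactly `(B(z) conj B(t))^D · k(z,t)`.
The identity `|1 - conj a · z|² - |z - a|² = (1 - |a|²)(1 - |z|²)` gives
`|B(z)| ≤ (|a| + |z|)/(1 + |a||z|)`, which increases with `|z|`, and `|k(z,t)| ≤ 1/(1 - ρ²)`.
-/

/-- The Blaschke factor with parameter `a` in the open unit disk. -/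
noncomputable def blaschke (a z : ℂ) : ℂ := (z - a) / (1 - starRingEnd ℂ a * z)

/-- The `j`-th discrete Laguerre function with parameter `a`. -/
noncomputable def laguerre (a : ℂ) (j : ℕ) (z : ℂ) : ℂ :=
  ((Real.sqrt (1 - ‖a‖ ^ 2) : ℂ) / (1 - starRingEnd ℂ a * z)) * blaschke a z ^ j

open ComplexConjugate Finset

theorem sub_sum_mul_geom_eq_pow_mul {R : Type*} [CommRing R] {k c w : R} (h : k - c = w * k)
    (n : ℕ) : k - ∑ j ∈ range n, c * w ^ j = w ^ n * k := by
  rw [← mul_sum]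
  linear_combination (∑ j ∈ range n, w ^ j) * h - k * mul_neg_geom_sum w n

theorem one_sub_norm_mul_le_norm_one_sub_conj_mul (w z : ℂ) :
    1 - ‖w‖ * ‖z‖ ≤ ‖1 - conj w * z‖ := by
  simpa [Complex.norm_conj] using norm_sub_norm_le (1 : ℂ) (conj w * z)

theorem one_sub_conj_mul_ne_zero {w z : ℂ} (h : ‖w‖ * ‖z‖ < 1) : 1 - conj w * z ≠ 0 :=
  norm_pos_iff.mp <| by linarith [one_sub_norm_mul_le_norm_one_sub_conj_mul w z]

theorem normSq_one_sub_conj_mul_sub_normSq_sub (a z : ℂ) :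
    Complex.normSq (1 - conj a * z) - Complex.normSq (z - a)
      = (1 - Complex.normSq a) * (1 - Complex.normSq z) := by
  simp only [Complex.normSq_apply, Complex.sub_re, Complex.sub_im, Complex.mul_re,
    Complex.mul_im, Complex.conj_re, Complex.conj_im, Complex.one_re, Complex.one_im]
  ring

theorem norm_sub_mul_le_mul_norm_one_sub_conj_mul {a z : ℂ} (ha : ‖a‖ ≤ 1) (hz : ‖z‖ ≤ 1) :
    ‖z - a‖ * (1 + ‖a‖ * ‖z‖) ≤ (‖a‖ + ‖z‖) * ‖1 - conj a * z‖ := by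
  have hid := normSq_one_sub_conj_mul_sub_normSq_sub a z
  simp only [Complex.normSq_eq_norm_sq] at hid
  have hd : ‖1 - conj a * z‖ ≤ 1 + ‖a‖ * ‖z‖ := by
    simpa [Complex.norm_conj] using norm_sub_le (1 : ℂ) (conj a * z)
  have hpos : 0 ≤ (1 - ‖a‖ ^ 2) * (1 - ‖z‖ ^ 2) :=
    mul_nonneg (by nlinarith [norm_nonneg a]) (by nlinarith [norm_nonneg z])
  have hd2 : ‖1 - conj a * z‖ ^ 2 ≤ (1 + ‖a‖ * ‖z‖) ^ 2 := pow_le_pow_left₀ (norm_nonneg _) hd 2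
  refine le_of_pow_le_pow_left₀ two_ne_zero (by positivity) ?_
  -- `(1 + |a||z|)² - (|a| + |z|)²` is the same factor `(1 - |a|²)(1 - |z|²)` as in `hid`
  nlinarith [mul_le_mul_of_nonneg_left hd2 hpos]

theorem norm_blaschke_le {a z : ℂ} (ha : ‖a‖ ≤ 1) (hz : ‖z‖ ≤ 1) :
    ‖blaschke a z‖ ≤ (‖a‖ + ‖z‖) / (1 + ‖a‖ * ‖z‖) := by
  rcases eq_or_ne (1 - conj a * z) 0 with hd | hd
  · simp only [blaschke, hd, div_zero, norm_zero]
    positivity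
  · rw [blaschke, norm_div, div_le_div_iff₀ (norm_pos_iff.mpr hd) (by positivity)]
    exact norm_sub_mul_le_mul_norm_one_sub_conj_mul ha hz

theorem add_div_one_add_mul_le_of_le {α r ρ : ℝ} (hα₀ : 0 ≤ α) (hα₁ : α ≤ 1) (hr : 0 ≤ r)
    (hrρ : r ≤ ρ) : (α + r) / (1 + α * r) ≤ (α + ρ) / (1 + α * ρ) := by
  rw [div_le_div_iff₀ (by positivity) (by nlinarith)]
  nlinarith [mul_nonneg (sub_nonneg.mpr hrρ)
    (mul_nonneg (sub_nonneg.mpr hα₁) (by linarith : 0 ≤ 1 + α))]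

theorem norm_blaschke_le_of_norm_le {a z : ℂ} {ρ : ℝ} (ha : ‖a‖ ≤ 1) (hρ : ρ ≤ 1)
    (hz : ‖z‖ ≤ ρ) : ‖blaschke a z‖ ≤ (‖a‖ + ρ) / (1 + ‖a‖ * ρ) :=
  (norm_blaschke_le ha (hz.trans hρ)).trans <|
    add_div_one_add_mul_le_of_le (norm_nonneg a) ha (norm_nonneg z) hz

theorem laguerre_eq_mul_blaschke_pow (a : ℂ) (j : ℕ) (z : ℂ) :
    laguerre a j z = laguerre a 0 z * blaschke a z ^ j := by
  simp [laguerre]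

theorem laguerre_mul_conj_laguerre (a : ℂ) (j : ℕ) (z t : ℂ) :
    laguerre a j z * conj (laguerre a j t)
      = laguerre a 0 z * conj (laguerre a 0 t) * (blaschke a z * conj (blaschke a t)) ^ j := by
  rw [laguerre_eq_mul_blaschke_pow a j z, laguerre_eq_mul_blaschke_pow a j t, map_mul, map_pow]
  ring

theorem inv_sub_laguerre_zero_mul_conj {a z t : ℂ} (ha : ‖a‖ ≤ 1) (hz : 1 - conj a * z ≠ 0)
    (ht : 1 - conj a * t ≠ 0) (htz : 1 - conj t * z ≠ 0) :
    1 / (1 - conj t * z) - laguerre a 0 z * conj (laguerre a 0 t)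
      = blaschke a z * conj (blaschke a t) * (1 / (1 - conj t * z)) := by
  have hz' : 1 - z * conj a ≠ 0 := by rwa [mul_comm]
  have ht' : 1 - conj t * a ≠ 0 := by simpa [mul_comm] using (map_ne_zero conj).mpr ht
  have hc : ((Real.sqrt (1 - ‖a‖ ^ 2) : ℂ)) ^ 2 = 1 - conj a * a := by
    rw [← Complex.ofReal_pow, Real.sq_sqrt (by nlinarith [norm_nonneg a]), mul_comm,
      Complex.mul_conj, Complex.normSq_eq_norm_sq]
    push_cast; ring
  simp only [laguerre, blaschke, pow_zero, mul_one, map_div₀, map_sub, map_mul, map_one,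
    Complex.conj_ofReal, Complex.conj_conj]
  field_simp
  rw [hc]
  ring

theorem inv_sub_sum_laguerre_mul_conj {a z t : ℂ} (ha : ‖a‖ ≤ 1) (hz : 1 - conj a * z ≠ 0)
    (ht : 1 - conj a * t ≠ 0) (htz : 1 - conj t * z ≠ 0) (D : ℕ) :
    1 / (1 - conj t * z) - ∑ j ∈ range D, laguerre a j z * conj (laguerre a j t)
      = (blaschke a z * conj (blaschke a t)) ^ D * (1 / (1 - conj t * z)) := by
  rw [sum_congr rfl fun j _ => laguerre_mul_conj_laguerre a j z t]
  exact sub_sum_mul_geom_eq_pow_mul (inv_sub_laguerre_zero_mul_conj ha hz ht htz) D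

theorem laguerre_kernel_uniform_error_bound_general (a : ℂ) (ha : ‖a‖ < 1)
    (ρ : ℝ) (hρ1 : ρ < 1) (D : ℕ) (z t : ℂ)
    (hz : ‖z‖ ≤ ρ) (ht : ‖t‖ ≤ ρ) :
    ‖1 / (1 - starRingEnd ℂ t * z)
        - ∑ j ∈ Finset.range D, laguerre a j z * starRingEnd ℂ (laguerre a j t)‖
      ≤ ((‖a‖ + ρ) / (1 + ‖a‖ * ρ)) ^ (2 * D) / (1 - ρ ^ 2) := by
  have hρ : 0 ≤ ρ := (norm_nonneg z).trans hz
  have hsmall : ∀ {w v : ℂ}, ‖w‖ ≤ 1 → ‖v‖ ≤ ρ → ‖w‖ * ‖v‖ < 1 := fun hw hv =>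
    (mul_le_of_le_one_left (norm_nonneg _) hw).trans_lt (hv.trans_lt hρ1)
  have htz : 1 - ρ ^ 2 ≤ ‖1 - conj t * z‖ := by
    nlinarith [one_sub_norm_mul_le_norm_one_sub_conj_mul t z, mul_le_mul ht hz (norm_nonneg z) hρ]
  rw [inv_sub_sum_laguerre_mul_conj ha.le (one_sub_conj_mul_ne_zero (hsmall ha.le hz))
    (one_sub_conj_mul_ne_zero (hsmall ha.le ht))
    (one_sub_conj_mul_ne_zero (hsmall (ht.trans hρ1.le) hz)) D,
    norm_mul, norm_pow, norm_mul, Complex.norm_conj, norm_div, norm_one, mul_one_div, pow_mul,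
    sq]
  gcongr
  · nlinarith
  · exact norm_blaschke_le_of_norm_le ha.le hρ1.le hz
  · exact norm_blaschke_le_of_norm_le ha.le hρ1.le ht

/-- **Uniform error bound for the truncated Laguerre kernel.** For `|a| < 1`,
`0 < ρ < 1` and `|z|, |t| ≤ ρ`, the truncated Laguerre kernel
`ξ_D^a(z,t) = ∑_{j<D} L_j^a(z) conj(L_j^a(t))` approximates the Cauchy kernel
`ξ(z,t) = 1/(1 − conj t · z)` with error at most `((|a|+ρ)/(1+|a|ρ))^{2D}/(1−ρ²)`. -/
theorem laguerre_kernel_uniform_error_bound (a : ℂ) (ha : ‖a‖ < 1)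
    (ρ : ℝ) (hρ : 0 < ρ) (hρ1 : ρ < 1) (D : ℕ) (z t : ℂ)
    (hz : ‖z‖ ≤ ρ) (ht : ‖t‖ ≤ ρ) :
    ‖1 / (1 - starRingEnd ℂ t * z)
        - ∑ j ∈ Finset.range D, laguerre a j z * starRingEnd ℂ (laguerre a j t)‖
      ≤ ((‖a‖ + ρ) / (1 + ‖a‖ * ρ)) ^ (2 * D) / (1 - ρ ^ 2) :=
  laguerre_kernel_uniform_error_bound_general a ha ρ hρ1 D z t hz ht
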